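/- Fix b ≠ 0, ω irrational, a ∈ ℝ and φ ∈ ℝ. Then the Almost Mathieu eigenvalue equation x_{n+1} + x_{n-1} + b·cos(2πωn + φ)·x_n = a·x_n cannot have two linearly independent solutions that are both quasi-periodic with frequency ω (i.e. of the form x_n = ψ(2πωn + φ) with ψ continuous on the circle). -/

import Mathlib

/-!
Extend a quasi-periodic solution `x n = ψ (2πωn + φ)` to the whole circle: by density of the
irrational rotation orbit, `ψ` satisfies `ψ (θ + 2πω) + ψ (θ - 2πω) + b cos θ ψ θ = a ψ θ` for
every `θ`. Taking Fourier coefficients (Aubry duality) turns this into a second-order difference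
equation for `ψ̂`, whose solutions coming from continuous `ψ` tend to zero. The Wronskian of two
such solutions is constant and tends to zero, hence vanishes, so `χ̂` is a multiple of `ψ̂`, and by
injectivity of the Fourier transform `χ` is a multiple of `ψ`.
-/

open Filter Topology MeasureTheory AddCircle

section Recurrence

variable {R : Type*} [CommRing R]

def SolvesSchrodinger (c : ℤ → R) (u : ℤ → R) : Prop :=
  ∀ m, u (m + 1) + u (m - 1) = c m * u m

def wronskian (u v : ℤ → R) (m : ℤ) : R :=
  u (m + 1) * v m - u m * v (m + 1)

namespace SolvesSchrodinger

variable {c u v : ℤ → R}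

theorem wronskian_succ (hu : SolvesSchrodinger c u) (hv : SolvesSchrodinger c v) (m : ℤ) :
    wronskian u v (m + 1) = wronskian u v m := by
  have hu' := hu (m + 1)
  have hv' := hv (m + 1)
  rw [add_sub_cancel_right] at hu' hv'
  unfold wronskian
  linear_combination v (m + 1) * hu' - u (m + 1) * hv'

theorem wronskian_eq (hu : SolvesSchrodinger c u) (hv : SolvesSchrodinger c v) (m : ℤ) :
    wronskian u v m = wronskian u v 0 := by
  induction m using Int.induction_on with
  | zero => rfl
  | succ k ih => rw [hu.wronskian_succ hv, ih]
  | pred k ih => rw [← ih, ← hu.wronskian_succ hv, sub_add_cancel]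

theorem eq_zero_of_consecutive (hu : SolvesSchrodinger c u) {m₀ : ℤ} (h₀ : u m₀ = 0)
    (h₁ : u (m₀ + 1) = 0) : u = 0 := by
  have key : ∀ m, u m = 0 ∧ u (m + 1) = 0 := by
    intro m
    induction m using Int.inductionOn' (b := m₀) with
    | zero => exact ⟨h₀, h₁⟩
    | succ k _ ih =>
      refine ⟨ih.2, ?_⟩
      have h := hu (k + 1)
      rw [add_sub_cancel_right, ih.1, ih.2, mul_zero, add_zero] at h
      exact h
    | pred k _ ih =>
      refine ⟨?_, by rw [sub_add_cancel]; exact ih.1⟩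
      have h := hu k
      rw [ih.1, ih.2, mul_zero, zero_add] at h
      exact h
  exact funext fun m => (key m).1

theorem sub_smul (hu : SolvesSchrodinger c u) (hv : SolvesSchrodinger c v) (r : R) :
    SolvesSchrodinger c (v - r • u) := fun m => by
  simp only [Pi.sub_apply, Pi.smul_apply, smul_eq_mul]
  linear_combination hv m - r * hu m

end SolvesSchrodinger

namespace SolvesSchrodinger

variable {K : Type*} [Field K] {c u v : ℤ → K}

theorem eq_smul_of_wronskian_eq_zero (hu : SolvesSchrodinger c u) (hv : SolvesSchrodinger c v)
    (hW : wronskian u v 0 = 0) {m₀ : ℤ} (hm₀ : u m₀ ≠ 0) : v = (v m₀ / u m₀) • u := by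
  rw [← sub_eq_zero]
  refine (hu.sub_smul hv _).eq_zero_of_consecutive (m₀ := m₀) ?_ ?_
  · simp [hm₀]
  · have hWm₀ : wronskian u v m₀ = 0 := (hu.wronskian_eq hv m₀).trans hW
    simp only [wronskian] at hWm₀
    simp only [Pi.sub_apply, Pi.smul_apply, smul_eq_mul]
    field_simp
    linear_combination -hWm₀

theorem eq_zero_or_eq_smul_of_tendsto [TopologicalSpace K] [IsTopologicalRing K] [T2Space K]
    (hu : SolvesSchrodinger c u) (hv : SolvesSchrodinger c v)
    (hu₀ : Tendsto u cofinite (𝓝 0)) (hv₀ : Tendsto v cofinite (𝓝 0)) :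
    u = 0 ∨ ∃ r : K, v = r • u := by
  have hshift : Tendsto (· + 1 : ℤ → ℤ) cofinite cofinite :=
    (add_left_injective 1).tendsto_cofinite
  have hW : Tendsto (wronskian u v) cofinite (𝓝 0) := by
    have h := ((hu₀.comp hshift).mul hv₀).sub (hu₀.mul (hv₀.comp hshift))
    rwa [mul_zero, sub_zero] at h
  have hW₀ : wronskian u v 0 = 0 :=
    tendsto_nhds_unique (tendsto_const_nhds.congr fun m => (hu.wronskian_eq hv m).symm) hW
  by_cases h : u = 0
  · exact .inl h
  · obtain ⟨m₀, hm₀⟩ := Function.ne_iff.mp h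
    exact .inr ⟨_, hu.eq_smul_of_wronskian_eq_zero hv hW₀ hm₀⟩

end SolvesSchrodinger

end Recurrence

section Fourier

variable {T : ℝ}

theorem fourier_neg_apply (n : ℤ) (α : AddCircle T) : fourier n (-α) = fourier (-n) α := by
  rw [fourier_apply, fourier_apply, smul_neg, neg_smul]

/-- Since `fourier m α + fourier (-m) α = 2 cos (2π m α / T)`, this is the Almost Mathieu potential
with coupling `4 / b`, shifted by the energy `2 a / b`. -/
noncomputable def aubryDualPotential (a b : ℂ) (α : AddCircle T) (m : ℤ) : ℂ :=
  2 / b * (a - fourier m α - fourier (-m) α)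

variable [Fact (0 < T)]

theorem eq_of_fourierCoeff_eq {f g : AddCircle T → ℂ} (hf : Continuous f) (hg : Continuous g)
    (h : fourierCoeff f = fourierCoeff g) : f = g := by
  let F : C(AddCircle T, ℂ) := ⟨f, hf⟩
  let G : C(AddCircle T, ℂ) := ⟨g, hg⟩
  have hFG : ContinuousMap.toLp (E := ℂ) 2 haarAddCircle ℂ F =
      ContinuousMap.toLp (E := ℂ) 2 haarAddCircle ℂ G := by
    refine fourierBasis.repr.injective (lp.ext (funext fun n => ?_))
    simp only [fourierBasis_repr, fourierCoeff_toLp]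
    exact congrFun h n
  exact congrArg DFunLike.coe (ContinuousMap.toLp_injective haarAddCircle hFG)

theorem tendsto_fourierCoeff_cofinite {f : AddCircle T → ℂ} (hf : Continuous f) :
    Tendsto (fourierCoeff f) cofinite (𝓝 0) := by
  have hsq := (hasSum_sq_fourierCoeff
    (ContinuousMap.toLp (E := ℂ) 2 haarAddCircle ℂ ⟨f, hf⟩)).summable.tendsto_cofinite_zero
  simp only [fourierCoeff_toLp] at hsq
  rw [tendsto_zero_iff_norm_tendsto_zero]
  simpa [Function.comp_def] using (Real.continuous_sqrt.tendsto 0).comp hsq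

section

variable {E : Type*} [NormedAddCommGroup E] [NormedSpace ℂ E]

theorem fourierCoeff_comp_add_right (f : AddCircle T → E) (α : AddCircle T) (n : ℤ) :
    fourierCoeff (fun θ => f (θ + α)) n = fourier n α • fourierCoeff f n := by
  have hshift : ∀ θ, fourier (-n) (θ - α) = fourier n α * fourier (-n) θ := fun θ => by
    rw [fourier_apply, fourier_apply, fourier_apply, smul_sub, neg_smul, neg_smul,
      sub_eq_add_neg, neg_neg, AddCircle.toCircle_add, mul_comm]
    push_cast; rfl
  calc fourierCoeff (fun θ => f (θ + α)) n
      = ∫ θ, fourier (-n) ((θ + α) - α) • f (θ + α) ∂haarAddCircle := by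
        simp only [add_sub_cancel_right]; rfl
    _ = ∫ θ, fourier (-n) (θ - α) • f θ ∂haarAddCircle :=
        integral_add_right_eq_self (fun θ => fourier (-n) (θ - α) • f θ) α
    _ = fourier n α • fourierCoeff f n := by
        simp only [hshift, mul_smul, fourierCoeff, integral_smul]

theorem fourierCoeff_fourier_smul (f : AddCircle T → E) (k n : ℤ) :
    fourierCoeff (fun θ => fourier k θ • f θ) n = fourierCoeff f (n - k) := by
  simp only [fourierCoeff, smul_smul, ← fourier_add, neg_sub', sub_neg_eq_add, add_comm]

end

theorem solvesSchrodinger_fourierCoeff {f : AddCircle T → ℂ} (hf : Continuous f) {a b : ℂ}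
    (hb : b ≠ 0) (α : AddCircle T)
    (h : ∀ θ, f (θ + α) + f (θ - α) + b / 2 * (fourier 1 θ + fourier (-1) θ) * f θ = a * f θ) :
    SolvesSchrodinger (aubryDualPotential a b α) (fourierCoeff f) := by
  intro m
  have integrable : ∀ {g : AddCircle T → ℂ}, Continuous g → Integrable g haarAddCircle :=
    fun hg => hg.integrable_of_hasCompactSupport (HasCompactSupport.of_compactSpace _)
  have hshift (β : AddCircle T) : Continuous fun θ => f (θ + β) := hf.comp (continuous_add_const β)
  have hmul (k : ℤ) : Continuous fun θ => fourier k θ • f θ := (fourier k).continuous.smul hf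
  have hfun : (fun θ => f (θ + α)) + (fun θ => f (θ + -α)) +
      (b / 2) • ((fun θ => fourier 1 θ • f θ) + (fun θ => fourier (-1) θ • f θ)) = a • f := by
    funext θ
    simp only [Pi.add_apply, Pi.smul_apply, smul_eq_mul, ← sub_eq_add_neg]
    linear_combination h θ
  have hcoeff := congrFun (congrArg fourierCoeff hfun) m
  rw [fourierCoeff.add (integrable ((hshift α).add (hshift (-α))))
      (integrable (((hmul 1).add (hmul (-1))).const_smul (b / 2))),
    fourierCoeff.add (integrable (hshift α)) (integrable (hshift (-α)))] at hcoeff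
  simp only [Pi.add_apply, fourierCoeff.const_smul] at hcoeff
  rw [fourierCoeff.add (integrable (hmul 1)) (integrable (hmul (-1))), Pi.add_apply,
    fourierCoeff_fourier_smul, fourierCoeff_fourier_smul] at hcoeff
  simp only [fourierCoeff_comp_add_right, fourier_neg_apply, sub_neg_eq_add, smul_eq_mul] at hcoeff
  rw [aubryDualPotential]
  field_simp
  linear_combination 2 * hcoeff

theorem eq_zero_or_eq_smul_of_solvesSchrodinger {ψ χ : AddCircle T → ℝ}
    (hψ : Continuous ψ) (hχ : Continuous χ) {c : ℤ → ℂ}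
    (hψc : SolvesSchrodinger c (fourierCoeff fun θ => (ψ θ : ℂ)))
    (hχc : SolvesSchrodinger c (fourierCoeff fun θ => (χ θ : ℂ))) :
    ψ = 0 ∨ ∃ r : ℝ, χ = r • ψ := by
  have hψC : Continuous fun θ => (ψ θ : ℂ) := Complex.continuous_ofReal.comp hψ
  have hχC : Continuous fun θ => (χ θ : ℂ) := Complex.continuous_ofReal.comp hχ
  rcases hψc.eq_zero_or_eq_smul_of_tendsto hχc (tendsto_fourierCoeff_cofinite hψC)
    (tendsto_fourierCoeff_cofinite hχC) with h | ⟨l, hl⟩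
  · left
    have h0 : (fun θ => (ψ θ : ℂ)) = 0 := eq_of_fourierCoeff_eq hψC continuous_const <| by
      rw [h]; ext n; simp [fourierCoeff]
    funext θ
    simpa using congrFun h0 θ
  · right
    refine ⟨l.re, funext fun θ => ?_⟩
    have hl' : (fun θ => (χ θ : ℂ)) = l • fun θ => (ψ θ : ℂ) :=
      eq_of_fourierCoeff_eq hχC (hψC.const_smul l) <| by
        rw [hl]; ext n; exact (fourierCoeff.const_smul _ l n).symm
    simpa using congrArg Complex.re (congrFun hl' θ)

end Fourier

section AlmostMathieu

open Real

instance : Fact (0 < 2 * π) := ⟨two_pi_pos⟩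

theorem denseRange_coe_mul_add {T ω : ℝ} (hT : T ≠ 0) (hω : Irrational ω) (φ : ℝ) :
    DenseRange fun n : ℤ => ((T * ω * n + φ : ℝ) : AddCircle T) := by
  have hrot : DenseRange (· • ((T * ω : ℝ) : AddCircle T) : ℤ → AddCircle T) :=
    AddCircle.denseRange_zsmul_coe_iff.mpr (by rwa [mul_div_cancel_left₀ _ hT])
  convert (Homeomorph.addRight (φ : AddCircle T)).surjective.denseRange.comp hrot
    (Homeomorph.addRight _).continuous using 1
  funext n
  simp [← AddCircle.coe_zsmul, mul_comm]

theorem fourier_one_add_fourier_neg_one (t : ℝ) :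
    (fourier 1 (t : AddCircle (2 * π)) + fourier (-1) (t : AddCircle (2 * π)) : ℂ) =
      2 * Real.cos t := by
  rw [fourier_coe_apply, fourier_coe_apply, Complex.ofReal_cos, Complex.two_cos]
  have hπ : (π : ℂ) ≠ 0 := Complex.ofReal_ne_zero.mpr pi_ne_zero
  congr 2 <;> push_cast <;> field_simp

theorem quasiperiodic_functional_eq {a b ω φ : ℝ} (hω : Irrational ω) {x : ℤ → ℝ}
    (hx : ∀ n : ℤ, x (n + 1) + x (n - 1) + b * Real.cos (2 * π * ω * n + φ) * x n = a * x n)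
    {ψ : AddCircle (2 * π) → ℝ} (hψ : Continuous ψ)
    (hxqp : ∀ n : ℤ, x n = ψ ((2 * π * ω * n + φ : ℝ))) (θ : AddCircle (2 * π)) :
    (ψ (θ + (2 * π * ω : ℝ)) : ℂ) + ψ (θ - (2 * π * ω : ℝ)) +
      b / 2 * (fourier 1 θ + fourier (-1) θ) * ψ θ = a * ψ θ := by
  revert θ
  refine funext_iff.mp
    ((denseRange_coe_mul_add two_pi_pos.ne' hω φ).equalizer ?_ ?_ (funext fun n => ?_))
  · fun_prop
  · fun_prop
  have hsucc : ((2 * π * ω * n + φ : ℝ) : AddCircle (2 * π)) + (2 * π * ω : ℝ) =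
      (2 * π * ω * (n + 1 : ℤ) + φ : ℝ) := by
    rw [← AddCircle.coe_add]; congr 1; push_cast; ring
  have hpred : ((2 * π * ω * n + φ : ℝ) : AddCircle (2 * π)) - (2 * π * ω : ℝ) =
      (2 * π * ω * (n - 1 : ℤ) + φ : ℝ) := by
    rw [← AddCircle.coe_sub]; congr 1; push_cast; ring
  simp only [Function.comp_apply, hsucc, hpred, fourier_one_add_fourier_neg_one, ← hxqp]
  exact_mod_cast by linear_combination hx n

theorem solvesSchrodinger_fourierCoeff_of_quasiperiodic {a b ω φ : ℝ} (hb : b ≠ 0)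
    (hω : Irrational ω) {x : ℤ → ℝ}
    (hx : ∀ n : ℤ, x (n + 1) + x (n - 1) + b * Real.cos (2 * π * ω * n + φ) * x n = a * x n)
    {ψ : AddCircle (2 * π) → ℝ} (hψ : Continuous ψ)
    (hxqp : ∀ n : ℤ, x n = ψ ((2 * π * ω * n + φ : ℝ))) :
    SolvesSchrodinger (aubryDualPotential a b ((2 * π * ω : ℝ) : AddCircle (2 * π)))
      (fourierCoeff fun θ => (ψ θ : ℂ)) :=
  solvesSchrodinger_fourierCoeff (Complex.continuous_ofReal.comp hψ)
    (Complex.ofReal_ne_zero.mpr hb) _ (quasiperiodic_functional_eq hω hx hψ hxqp)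

end AlmostMathieu

/-- The Almost Mathieu equation (b ≠ 0, ω irrational) cannot have two
linearly independent solutions that are both quasi-periodic with frequency ω. -/
theorem no_coexistence_quasiperiodic_solutions
    (a b ω φ : ℝ) (hb : b ≠ 0) (hω : Irrational ω)
    (x y : ℤ → ℝ)
    (hx : ∀ n : ℤ, x (n + 1) + x (n - 1)
      + b * Real.cos (2 * Real.pi * ω * n + φ) * x n = a * x n)
    (hy : ∀ n : ℤ, y (n + 1) + y (n - 1)
      + b * Real.cos (2 * Real.pi * ω * n + φ) * y n = a * y n)
    (ψ χ : AddCircle (2 * Real.pi) → ℝ) (hψ : Continuous ψ) (hχ : Continuous χ)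
    (hxqp : ∀ n : ℤ, x n = ψ ((2 * Real.pi * ω * n + φ : ℝ)))
    (hyqp : ∀ n : ℤ, y n = χ ((2 * Real.pi * ω * n + φ : ℝ))) :
    ¬ LinearIndependent ℝ ![x, y] := by
  intro hli
  rcases eq_zero_or_eq_smul_of_solvesSchrodinger hψ hχ
    (solvesSchrodinger_fourierCoeff_of_quasiperiodic hb hω hx hψ hxqp)
    (solvesSchrodinger_fourierCoeff_of_quasiperiodic hb hω hy hχ hyqp) with hψ0 | ⟨r, hr⟩
  · exact hli.ne_zero 0 (funext fun n => by simp [hxqp, hψ0])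
  · have hdep : r • x + (-1 : ℝ) • y = 0 := funext fun n => by simp [hxqp, hyqp, hr]
    exact one_ne_zero (neg_eq_zero.mp (LinearIndependent.pair_iff.mp hli r (-1) hdep).2)
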